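/- arXiv:0905.0556 — 2 statements merged into one kernel-verified Lean document; each statement's English description precedes it below -/
import Mathlib

section
/- Fix integers k ≥ 2 and 1 ≤ j ≤ k−1. Let u_1,…,u_k and v_1,…,v_k be indeterminates with the conventions u_k = 1, u_{k−1} = 0, v_k = 0, and u_r = v_r = 0 for r ≤ 0 and for r > k. Then, as polynomials in y (with coefficients polynomials in the u's and v's), one has the identity: Σ_{i=1}^{k−1} Σ_{r=1}^{i−1} (u_{i+j−r} v_r − u_r v_{i+j−r}) y^i − Σ_{i=1}^{k} Σ_{r=1}^{k−1} (u_{r+j} v_i − u_i v_{r+j}) y^{i+r} + v_j y^k = 0. -/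
open Finset

/-! With `f (a, i) = (u_{a+j} v_i - u_i v_{a+j}) y^{a+i}`, the substitution `a = i - r` turns the first
double sum into the sum of `f` over the triangle `a + i ≤ k - 1`, and the second double sum is its sum
over the rectangle `[1, k - 1] × [1, k]`. So the identity says that `f` sums to `v_j y^k` over the rest
of the rectangle, `a + i ≥ k`. There the terms with `a + j > k` vanish, the involution
`(a, i) ↦ (i - j, a + j)` sorts the terms with `i > j` into cancelling pairs because `u_m v_n - u_n v_m`
is alternating in `(m, n)`, and the one term left, at `(a, i) = (k - j, j)`, is `u_k v_j y^k = v_j y^k`. -/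

section Wedge

variable {R : Type*} [CommRing R] (u v : ℕ → R)

def wedge (m n : ℕ) : R := u m * v n - u n * v m

theorem wedge_self (m : ℕ) : wedge u v m m = 0 := sub_self _

theorem wedge_anticomm (m n : ℕ) : wedge u v m n = -wedge u v n m := by
  unfold wedge; ring

variable {u v}

theorem wedge_eq_zero_of_lt {k m : ℕ} (hu : ∀ r, k < r → u r = 0) (hv : ∀ r, k < r → v r = 0)
    (hm : k < m) (n : ℕ) : wedge u v m n = 0 := by
  simp only [wedge, hu m hm, hv m hm, zero_mul, mul_zero, sub_zero]

end Wedge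

theorem sum_Icc_sum_Icc_pred_eq_sum_filter {M : Type*} [AddCommMonoid M] {n m : ℕ} (hnm : n ≤ m)
    (F : ℕ → ℕ → M) :
    ∑ i ∈ Icc 1 n, ∑ r ∈ Icc 1 (i - 1), F i r
      = ∑ p ∈ Icc 1 n ×ˢ Icc 1 m with p.1 + p.2 ≤ n, F (p.1 + p.2) p.2 := by
  rw [sum_sigma']
  refine sum_nbij' (fun q => (q.1 - q.2, q.2)) (fun p => ⟨p.1 + p.2, p.2⟩) ?_ ?_ ?_ ?_ ?_ <;>
    rintro ⟨a, b⟩ h <;> simp only [mem_sigma, mem_filter, mem_product, mem_Icc] at h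
  · simp only [mem_filter, mem_product, mem_Icc]; omega
  · simp only [mem_sigma, mem_Icc]; omega
  · dsimp only; rw [Nat.sub_add_cancel (by omega)]
  · dsimp only; rw [Nat.add_sub_cancel]
  · dsimp only; rw [Nat.sub_add_cancel (by omega)]

theorem filter_Icc_product_Icc_le_add_eq_singleton {j k : ℕ} (hj1 : 1 ≤ j) (hjk : j < k) :
    {p ∈ Icc 1 (k - j) ×ˢ Icc 1 j | k ≤ p.1 + p.2} = {(k - j, j)} := by
  ext ⟨a, i⟩
  simp only [mem_filter, mem_product, mem_Icc, mem_singleton, Prod.mk.injEq]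
  omega

section Sums

variable {R : Type*} [CommRing R] {u v : ℕ → R} (y : R)

theorem sum_wedge_add_mul_pow_eq_zero (j k s : ℕ) :
    ∑ p ∈ Icc 1 (k - j) ×ˢ Icc (j + 1) k with s ≤ p.1 + p.2,
      wedge u v (p.1 + j) p.2 * y ^ (p.1 + p.2) = 0 := by
  refine sum_involution (fun p _ => (p.2 - j, p.1 + j)) ?_ ?_ ?_ ?_ <;>
    rintro ⟨a, i⟩ h <;> simp only [mem_filter, mem_product, mem_Icc] at h
  · dsimp only
    rw [Nat.sub_add_cancel (by omega), show i - j + (a + j) = a + i by omega,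
      wedge_anticomm u v i, add_comm a i, neg_mul, add_neg_cancel]
  · intro hne heq
    simp only [Prod.mk.injEq] at heq
    rw [heq.2, wedge_self, zero_mul] at hne
    exact hne rfl
  · simp only [mem_filter, mem_product, mem_Icc]; omega
  · simp only [Prod.mk.injEq]; omega

theorem sum_wedge_add_mul_pow_outside_triangle {j k : ℕ} (hj1 : 1 ≤ j) (hjk : j < k)
    (huk : u k = 1) (hvk : v k = 0) (hu : ∀ r, k < r → u r = 0) (hv : ∀ r, k < r → v r = 0) :
    ∑ p ∈ Icc 1 (k - 1) ×ˢ Icc 1 k with ¬p.1 + p.2 ≤ k - 1,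
      wedge u v (p.1 + j) p.2 * y ^ (p.1 + p.2) = v j * y ^ k := by
  calc _ = ∑ p ∈ Icc 1 (k - j) ×ˢ Icc 1 k with k ≤ p.1 + p.2,
          wedge u v (p.1 + j) p.2 * y ^ (p.1 + p.2) := by
        refine (sum_subset (fun p hp => ?_) fun p hp hp' => ?_).symm
        · simp only [mem_filter, mem_product, mem_Icc] at hp ⊢; omega
        · simp only [mem_filter, mem_product, mem_Icc] at hp hp'
          rw [wedge_eq_zero_of_lt hu hv (by omega), zero_mul]
    _ = ∑ p ∈ Icc 1 (k - j) ×ˢ Icc 1 j with k ≤ p.1 + p.2,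
          wedge u v (p.1 + j) p.2 * y ^ (p.1 + p.2)
        + ∑ p ∈ Icc 1 (k - j) ×ˢ Icc (j + 1) k with k ≤ p.1 + p.2,
          wedge u v (p.1 + j) p.2 * y ^ (p.1 + p.2) := by
        rw [← sum_union (disjoint_left.2 fun p h₁ h₂ => by
          simp only [mem_filter, mem_product, mem_Icc] at h₁ h₂; omega)]
        congr 1
        ext ⟨a, i⟩
        simp only [mem_union, mem_filter, mem_product, mem_Icc]
        omega
    _ = v j * y ^ k := by
        rw [filter_Icc_product_Icc_le_add_eq_singleton hj1 hjk, sum_singleton,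
          sum_wedge_add_mul_pow_eq_zero, add_zero, Nat.sub_add_cancel hjk.le]
        simp only [wedge, huk, hvk, one_mul, mul_zero, sub_zero]

end Sums

theorem first_family_key_identity_general {R : Type*} [CommRing R]
    (k j : ℕ) (hj1 : 1 ≤ j) (hj2 : j ≤ k - 1)
    (u v : ℕ → R) (y : R)
    (huk : u k = 1) (hvk : v k = 0)
    (hu : ∀ r, k < r → u r = 0) (hv : ∀ r, k < r → v r = 0) :
    (∑ i ∈ Icc 1 (k - 1), ∑ r ∈ Icc 1 (i - 1),
        (u (i + j - r) * v r - u r * v (i + j - r)) * y ^ i)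
      - (∑ i ∈ Icc 1 k, ∑ r ∈ Icc 1 (k - 1),
          (u (r + j) * v i - u i * v (r + j)) * y ^ (i + r))
      + v j * y ^ k = 0 := by
  set f : ℕ × ℕ → R := fun p => wedge u v (p.1 + j) p.2 * y ^ (p.1 + p.2)
  have htriangle : (∑ i ∈ Icc 1 (k - 1), ∑ r ∈ Icc 1 (i - 1),
      (u (i + j - r) * v r - u r * v (i + j - r)) * y ^ i)
      = ∑ p ∈ Icc 1 (k - 1) ×ˢ Icc 1 k with p.1 + p.2 ≤ k - 1, f p := by
    refine (sum_Icc_sum_Icc_pred_eq_sum_filter (Nat.sub_le k 1)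
      fun i r => wedge u v (i + j - r) r * y ^ i).trans (sum_congr rfl fun p _ => ?_)
    rw [Nat.add_right_comm, Nat.add_sub_cancel]
  have hrectangle : (∑ i ∈ Icc 1 k, ∑ r ∈ Icc 1 (k - 1),
      (u (r + j) * v i - u i * v (r + j)) * y ^ (i + r)) = ∑ p ∈ Icc 1 (k - 1) ×ˢ Icc 1 k, f p := by
    rw [sum_product, sum_comm]
    simp only [f, wedge, add_comm]
  rw [htriangle, hrectangle, ← sum_filter_add_sum_filter_not (Icc 1 (k - 1) ×ˢ Icc 1 k) (fun p => p.1 + p.2 ≤ k - 1),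
    sum_wedge_add_mul_pow_outside_triangle y hj1 (by omega) huk hvk hu hv]
  ring

/-- For `k ≥ 2` and `1 ≤ j ≤ k−1`, with the conventions
`u_k = 1`, `u_{k−1} = 0`, `v_k = 0`, and `u_r = v_r = 0` for `r ≤ 0` or `r > k`
(indices in `ℕ`, so `r ≤ 0` means `r = 0`), one has, for elements `u_r, v_r, y`
of a commutative ring (in particular for indeterminates of a polynomial ring):
`Σ_{i=1}^{k−1} Σ_{r=1}^{i−1} (u_{i+j−r} v_r − u_r v_{i+j−r}) y^i
 − Σ_{i=1}^{k} Σ_{r=1}^{k−1} (u_{r+j} v_i − u_i v_{r+j}) y^{i+r} + v_j y^k = 0`. -/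
theorem first_family_key_identity {R : Type*} [CommRing R]
    (k j : ℕ) (hk : 2 ≤ k) (hj1 : 1 ≤ j) (hj2 : j ≤ k - 1)
    (u v : ℕ → R) (y : R)
    (huk : u k = 1) (hukm1 : u (k - 1) = 0) (hvk : v k = 0)
    (hu0 : u 0 = 0) (hv0 : v 0 = 0)
    (hu : ∀ r, k < r → u r = 0) (hv : ∀ r, k < r → v r = 0) :
    (∑ i ∈ Icc 1 (k - 1), ∑ r ∈ Icc 1 (i - 1),
        (u (i + j - r) * v r - u r * v (i + j - r)) * y ^ i)
      - (∑ i ∈ Icc 1 k, ∑ r ∈ Icc 1 (k - 1),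
          (u (r + j) * v i - u i * v (r + j)) * y ^ (i + r))
      + v j * y ^ k = 0 :=
  first_family_key_identity_general k j hj1 hj2 u v y huk hvk hu hv
end

section
/- For k ≥ 2 and 1 ≤ j ≤ k−1, define vector fields on K^{2k−1} (coordinates U_1,…,U_{k−2}, V_1,…,V_{k−1}, W_1, W_2, with conventions U_{k−1} = V_k = 0, U_k = 1, U_r = V_r = 0 for r ≤ 0 or r > k) by components: Ã_i = 0 (1 ≤ i ≤ k−2), B̃_i = k Σ_{r=1}^{i−1} U_{i+j−r} V_r − k Σ_{r=1}^{i} U_r V_{i+j−r} − (k−1)(k−j) U_j V_i + k V_{i+j} W_1 − k U_{i+j} W_2 (1 ≤ i ≤ k−1), C̃_1 = 0, C̃_2 = −k V_j W_1 − (k−1)(k−j) U_j W_2. Then this vector field ξ̃_j is liftable over the minimal cross cap map φ_k, with lowerable field η_j having components a_i = 0, b_i = B̃_i ∘ φ_k-substitution (i.e. b_i obtained from B̃_i by replacing U_r ↦ u_r, V_r ↦ v_r, W_1 ↦ y^k + Σ u_i y^i, W_2 ↦ Σ v_i y^i), and c = 0. -/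
open MvPolynomial Finset

/-! STATEMENT 12: the vector field `ξ̃_j` (the first family minus a multiple of the
Euler field, as in the proof of Theorem `firstfamily`) is liftable over the minimal
cross cap map `φ_k`, with the indicated lowerable field.

We model `φ_k` as a polynomial map: domain variables are `u_1,…,u_{k−2}`,
`v_1,…,v_{k−1}`, `y` (type `CCDom k`), target variables `U_1,…,U_{k−2}`,
`V_1,…,V_{k−1}`, `W_1`, `W_2` (type `CCTgt k`).  The Jacobian of a polynomial map
is the matrix of partial derivatives `pderiv`, and the liftability equation
`Dφ_k · η = ξ ∘ φ_k` reads, coordinatewise in the target: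
`∑ s, ∂(φ_k)_m/∂x_s · η_s = (aeval φ_k) (ξ_m)`. -/

/-- Domain variable index set: `u`'s, `v`'s and `y`. -/
abbrev CCDom (k : ℕ) := Sum (Fin (k - 2)) (Sum (Fin (k - 1)) Unit)

/-- Target variable index set: `U`'s, `V`'s and `W₁, W₂`. -/
abbrev CCTgt (k : ℕ) := Sum (Fin (k - 2)) (Sum (Fin (k - 1)) (Fin 2))

section Defs

variable (K : Type*) [Field K] (k : ℕ)

/-- `u_r` in the domain, with dummy conventions `u_k = 1`, and `u_r = 0` for
`r = k−1`, `r ≤ 0` or `r > k`. -/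
noncomputable def ccu (r : ℕ) : MvPolynomial (CCDom k) K :=
  if h : 1 ≤ r ∧ r ≤ k - 2 then X (Sum.inl ⟨r - 1, by omega⟩)
  else if r = k then 1 else 0

/-- `v_r` in the domain, with `v_r = 0` for `r ≤ 0` or `r ≥ k`. -/
noncomputable def ccv (r : ℕ) : MvPolynomial (CCDom k) K :=
  if h : 1 ≤ r ∧ r ≤ k - 1 then X (Sum.inr (Sum.inl ⟨r - 1, by omega⟩)) else 0

/-- The domain variable `y`. -/
noncomputable def ccy : MvPolynomial (CCDom k) K := X (Sum.inr (Sum.inr ()))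

/-- The minimal cross cap map `φ_k` of multiplicity `k`, as a family of polynomials
in the domain variables, indexed by the target coordinates. -/
noncomputable def crossCap : CCTgt k → MvPolynomial (CCDom k) K :=
  Sum.elim (fun i => ccu K k (i + 1))
    (Sum.elim (fun i => ccv K k (i + 1))
      (fun w =>
        if w = (0 : Fin 2) then
          ccy K k ^ k + ∑ i ∈ Icc 1 (k - 2), ccu K k i * ccy K k ^ i
        else
          ∑ i ∈ Icc 1 (k - 1), ccv K k i * ccy K k ^ i))

/-- `U_r` in the target, with dummy conventions `U_k = 1`, `U_{k−1} = 0`, and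
`U_r = 0` for `r ≤ 0` or `r > k`. -/
noncomputable def ccU (r : ℕ) : MvPolynomial (CCTgt k) K :=
  if h : 1 ≤ r ∧ r ≤ k - 2 then X (Sum.inl ⟨r - 1, by omega⟩)
  else if r = k then 1 else 0

/-- `V_r` in the target, with `V_r = 0` for `r ≤ 0` or `r ≥ k`. -/
noncomputable def ccV (r : ℕ) : MvPolynomial (CCTgt k) K :=
  if h : 1 ≤ r ∧ r ≤ k - 1 then X (Sum.inr (Sum.inl ⟨r - 1, by omega⟩)) else 0

/-- The target variable `W₁`. -/
noncomputable def ccW1 : MvPolynomial (CCTgt k) K := X (Sum.inr (Sum.inr 0))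

/-- The target variable `W₂`. -/
noncomputable def ccW2 : MvPolynomial (CCTgt k) K := X (Sum.inr (Sum.inr 1))

/-- The `V_i`-component `B̃_{i,j}` of the vector field `ξ̃_j`:
`B̃_i = k Σ_{r=1}^{i−1} U_{i+j−r} V_r − k Σ_{r=1}^{i} U_r V_{i+j−r}
        − (k−1)(k−j) U_j V_i + k V_{i+j} W₁ − k U_{i+j} W₂`. -/
noncomputable def Btilde (j i : ℕ) : MvPolynomial (CCTgt k) K :=
  (k : MvPolynomial (CCTgt k) K) *
      ∑ r ∈ Icc 1 (i - 1), ccU K k (i + j - r) * ccV K k r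
    - (k : MvPolynomial (CCTgt k) K) *
        ∑ r ∈ Icc 1 i, ccU K k r * ccV K k (i + j - r)
    - ((k - 1) * (k - j) : ℕ) * ccU K k j * ccV K k i
    + (k : MvPolynomial (CCTgt k) K) * ccV K k (i + j) * ccW1 K k
    - (k : MvPolynomial (CCTgt k) K) * ccU K k (i + j) * ccW2 K k

/-- The `W₂`-component `C̃₂ = −k V_j W₁ − (k−1)(k−j) U_j W₂` of `ξ̃_j`. -/
noncomputable def Ctilde2 (j : ℕ) : MvPolynomial (CCTgt k) K :=
  -((k : MvPolynomial (CCTgt k) K) * ccV K k j * ccW1 K k)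
    - ((k - 1) * (k - j) : ℕ) * ccU K k j * ccW2 K k

/-- The vector field `ξ̃_j` on the target: components `Ã_i = 0`, `B̃_i` as above,
`C̃₁ = 0` and `C̃₂` as above. -/
noncomputable def xiTilde (j : ℕ) : CCTgt k → MvPolynomial (CCTgt k) K :=
  Sum.elim (fun _ => 0)
    (Sum.elim (fun i => Btilde K k j (i + 1))
      (fun w => if w = (0 : Fin 2) then 0 else Ctilde2 K k j))

/-- The lowerable field `η_j` on the domain: `a_i = 0`, `b_i = B̃_i ∘ φ_k`
(substituting `U_r ↦ u_r`, `V_r ↦ v_r`, `W₁, W₂ ↦` the last two components of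
`φ_k`), and `c = 0`. -/
noncomputable def etaLow (j : ℕ) : CCDom k → MvPolynomial (CCDom k) K :=
  Sum.elim (fun _ => 0)
    (Sum.elim (fun i => aeval (crossCap K k) (Btilde K k j (i + 1)))
      (fun _ => 0))

end Defs

/-! Only the `W₂`-row of `Dφ_k · η_j = ξ̃_j ∘ φ_k` needs an argument: `η_j` has only
`v`-components, the `U_i`- and `W₁`-components of `φ_k` do not involve `v`, and the `V_i`-rows
hold by the choice of `η_j`. Since `∂(∑ v_b y^b)/∂v_i = y^i`, the `W₂`-row says
`∑_i y^i b_i = C̃₂ ∘ φ_k`. The `(k−1)(k−j)`-terms match directly; every other term on either side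
is `±k u_a v_b y^{a+b−j}` for a pair `(a, b)` with `1 ≤ a ≤ k` and `1 ≤ b ≤ k−1`, and collecting
them, the coefficient of `u_a v_b y^{a+b−j}` is `[b ≥ j ∧ a+b ≥ k+j] − [a > j ∧ a+b ≥ k+j] = 0`. -/

section MixedTerms

variable {R : Type*} [CommRing R] (u v : ℕ → R) (y : R) (j : ℕ)

def mixedTerm (p : ℕ × ℕ) : R := u p.1 * v p.2 * y ^ (p.1 + p.2 - j)

variable {u v y j} {k : ℕ}

lemma mixedTerm_of_add_eq {a b n : ℕ} (h : a + b = n + j) :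
    mixedTerm u v y j (a, b) = u a * v b * y ^ n := by
  rw [mixedTerm, show a + b - j = n by omega]

lemma sum_pow_mul_sum_lower :
    ∑ i ∈ Icc 1 (k - 1), y ^ i * ∑ r ∈ Icc 1 (i - 1), u (i + j - r) * v r
      = ∑ p ∈ (Icc 1 (k + j) ×ˢ Icc 1 (k + j)).filter
          (fun p => j + 1 ≤ p.1 ∧ p.1 + p.2 ≤ k + j - 1), mixedTerm u v y j p := by
  simp_rw [mul_sum]
  rw [sum_sigma']
  refine sum_nbij' (fun p => (p.1 + j - p.2, p.2)) (fun p => ⟨p.1 + p.2 - j, p.2⟩)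
    ?_ ?_ ?_ ?_ ?_ <;> rintro ⟨a, b⟩ h <;>
    simp only [mem_filter, mem_product, mem_sigma, mem_Icc, Sigma.mk.injEq, Prod.mk.injEq,
      heq_eq_eq, and_true] at h ⊢
  any_goals omega
  rw [mixedTerm_of_add_eq (n := a) (by omega)]
  ring

lemma sum_pow_mul_sum_upper (hj : 1 ≤ j) :
    ∑ i ∈ Icc 1 (k - 1), y ^ i * ∑ r ∈ Icc 1 i, u r * v (i + j - r)
      = ∑ p ∈ (Icc 1 (k + j) ×ˢ Icc 1 (k + j)).filter
          (fun p => j ≤ p.2 ∧ j + 1 ≤ p.1 + p.2 ∧ p.1 + p.2 ≤ k + j - 1),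
          mixedTerm u v y j p := by
  simp_rw [mul_sum]
  rw [sum_sigma']
  refine sum_nbij' (fun p => (p.2, p.1 + j - p.2)) (fun p => ⟨p.1 + p.2 - j, p.1⟩)
    ?_ ?_ ?_ ?_ ?_ <;> rintro ⟨a, b⟩ h <;>
    simp only [mem_filter, mem_product, mem_sigma, mem_Icc, Sigma.mk.injEq, Prod.mk.injEq,
      heq_eq_eq, and_true, true_and] at h ⊢
  any_goals omega
  rw [mixedTerm_of_add_eq (n := a) (by omega)]
  ring

lemma sum_pow_mul_shift_mul_sum_left :
    ∑ i ∈ Icc 1 (k - 1), y ^ i * (v (i + j) * ∑ a ∈ Icc 1 k, u a * y ^ a)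
      = ∑ p ∈ (Icc 1 (k + j) ×ˢ Icc 1 (k + j)).filter
          (fun p => p.1 ≤ k ∧ j + 1 ≤ p.2 ∧ p.2 ≤ k + j - 1), mixedTerm u v y j p := by
  simp_rw [mul_sum]
  rw [← sum_product']
  refine sum_nbij' (fun p => (p.2, p.1 + j)) (fun p => (p.2 - j, p.1))
    ?_ ?_ ?_ ?_ ?_ <;> rintro ⟨a, b⟩ h <;>
    simp only [mem_filter, mem_product, mem_Icc, Prod.mk.injEq, and_true, true_and] at h ⊢
  any_goals omega
  rw [mixedTerm_of_add_eq (n := b + a) (by omega), pow_add]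
  ring

lemma sum_pow_mul_shift_mul_sum_right :
    ∑ i ∈ Icc 1 (k - 1), y ^ i * (u (i + j) * ∑ b ∈ Icc 1 (k - 1), v b * y ^ b)
      = ∑ p ∈ (Icc 1 (k + j) ×ˢ Icc 1 (k + j)).filter
          (fun p => j + 1 ≤ p.1 ∧ p.1 ≤ k + j - 1 ∧ p.2 ≤ k - 1), mixedTerm u v y j p := by
  simp_rw [mul_sum]
  rw [← sum_product']
  refine sum_nbij' (fun p => (p.1 + j, p.2)) (fun p => (p.1 - j, p.2))
    ?_ ?_ ?_ ?_ ?_ <;> rintro ⟨a, b⟩ h <;>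
    simp only [mem_filter, mem_product, mem_Icc, Prod.mk.injEq, and_true] at h ⊢
  any_goals omega
  rw [mixedTerm_of_add_eq (n := a + b) (by omega), pow_add]
  ring

lemma mul_sum_eq_sum_mixedTerm (hj : 1 ≤ j) :
    v j * ∑ a ∈ Icc 1 k, u a * y ^ a
      = ∑ p ∈ (Icc 1 (k + j) ×ˢ Icc 1 (k + j)).filter
          (fun p => p.1 ≤ k ∧ p.2 = j), mixedTerm u v y j p := by
  rw [mul_sum]
  refine sum_nbij' (fun a => (a, j)) Prod.fst ?_ ?_ ?_ ?_ ?_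
  · intro a h
    simp only [mem_filter, mem_product, mem_Icc, and_true] at h ⊢
    omega
  · rintro ⟨a, b⟩ h
    simp only [mem_filter, mem_product, mem_Icc] at h ⊢
    omega
  · intro a _
    rfl
  · rintro ⟨a, b⟩ h
    simp only [mem_filter] at h
    rw [h.2.2]
  · intro a _
    rw [mixedTerm_of_add_eq (n := a) rfl]
    ring

lemma sum_filter_mixedTerm_cancel (hj : 1 ≤ j) (hu : ∀ a, k < a → u a = 0)
    (hv : ∀ b, k - 1 < b → v b = 0) :
    ∑ p ∈ (Icc 1 (k + j) ×ˢ Icc 1 (k + j)).filter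
        (fun p => j + 1 ≤ p.1 ∧ p.1 + p.2 ≤ k + j - 1), mixedTerm u v y j p
    - ∑ p ∈ (Icc 1 (k + j) ×ˢ Icc 1 (k + j)).filter
        (fun p => j ≤ p.2 ∧ j + 1 ≤ p.1 + p.2 ∧ p.1 + p.2 ≤ k + j - 1), mixedTerm u v y j p
    + ∑ p ∈ (Icc 1 (k + j) ×ˢ Icc 1 (k + j)).filter
        (fun p => p.1 ≤ k ∧ j + 1 ≤ p.2 ∧ p.2 ≤ k + j - 1), mixedTerm u v y j p
    - ∑ p ∈ (Icc 1 (k + j) ×ˢ Icc 1 (k + j)).filter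
        (fun p => j + 1 ≤ p.1 ∧ p.1 ≤ k + j - 1 ∧ p.2 ≤ k - 1), mixedTerm u v y j p
    + ∑ p ∈ (Icc 1 (k + j) ×ˢ Icc 1 (k + j)).filter
        (fun p => p.1 ≤ k ∧ p.2 = j), mixedTerm u v y j p
    = 0 := by
  simp only [sum_filter, ← sum_sub_distrib, ← sum_add_distrib]
  refine sum_eq_zero fun ⟨a, b⟩ hab => ?_
  simp only [mem_product, mem_Icc] at hab
  by_cases ha : k < a
  · simp [mixedTerm, hu a ha]
  by_cases hb : k - 1 < b
  · simp [mixedTerm, hv b hb]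
  split_ifs <;> first | ring1 | omega

theorem sum_pow_mul_mixedSums (hj : 1 ≤ j) (hu : ∀ a, k < a → u a = 0)
    (hv : ∀ b, k - 1 < b → v b = 0) :
    ∑ i ∈ Icc 1 (k - 1), y ^ i *
        (∑ r ∈ Icc 1 (i - 1), u (i + j - r) * v r - ∑ r ∈ Icc 1 i, u r * v (i + j - r)
          + v (i + j) * ∑ a ∈ Icc 1 k, u a * y ^ a
          - u (i + j) * ∑ b ∈ Icc 1 (k - 1), v b * y ^ b)
      = -(v j * ∑ a ∈ Icc 1 k, u a * y ^ a) := by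
  simp only [mul_sub, mul_add, sum_sub_distrib, sum_add_distrib]
  rw [sum_pow_mul_sum_lower, sum_pow_mul_sum_upper hj, sum_pow_mul_shift_mul_sum_left,
    sum_pow_mul_shift_mul_sum_right, mul_sum_eq_sum_mixedTerm hj]
  linear_combination sum_filter_mixedTerm_cancel (y := y) hj hu hv

end MixedTerms

section CrossCap

variable {K : Type*} [Field K] {k : ℕ}

lemma ccu_eq_zero_of_lt {r : ℕ} (h : k < r) : ccu K k r = 0 := by
  rw [ccu, dif_neg (by omega), if_neg (by omega)]

lemma ccv_eq_zero_of_lt {r : ℕ} (h : k - 1 < r) : ccv K k r = 0 := by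
  rw [ccv, dif_neg (by omega)]

lemma aeval_crossCap_ccU (r : ℕ) : aeval (crossCap K k) (ccU K k r) = ccu K k r := by
  by_cases h : 1 ≤ r ∧ r ≤ k - 2
  · rw [ccU, dif_pos h, aeval_X, crossCap, Sum.elim_inl, Nat.sub_add_cancel h.1]
  · rw [ccU, ccu, dif_neg h, dif_neg h]
    split_ifs <;> simp

lemma aeval_crossCap_ccV (r : ℕ) : aeval (crossCap K k) (ccV K k r) = ccv K k r := by
  by_cases h : 1 ≤ r ∧ r ≤ k - 1
  · rw [ccV, dif_pos h, aeval_X, crossCap, Sum.elim_inr, Sum.elim_inl, Nat.sub_add_cancel h.1]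
  · rw [ccV, ccv, dif_neg h, dif_neg h, map_zero]

lemma crossCap_W1 (hk : 2 ≤ k) :
    crossCap K k (Sum.inr (Sum.inr 0)) = ∑ a ∈ Icc 1 k, ccu K k a * ccy K k ^ a := by
  obtain ⟨n, rfl⟩ : ∃ n, k = n + 2 := ⟨k - 2, by omega⟩
  have hu_top : ccu K (n + 2) (n + 2) = 1 := by rw [ccu, dif_neg (by omega), if_pos rfl]
  have hu_pred : ccu K (n + 2) (n + 1) = 0 := by rw [ccu, dif_neg (by omega), if_neg (by omega)]
  rw [sum_Icc_succ_top (by omega), sum_Icc_succ_top (by omega), hu_top, hu_pred]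
  simp only [crossCap, Sum.elim_inr, if_pos, Nat.add_sub_cancel, zero_mul, add_zero, one_mul]
  ring

lemma crossCap_W2 :
    crossCap K k (Sum.inr (Sum.inr 1)) = ∑ b ∈ Icc 1 (k - 1), ccv K k b * ccy K k ^ b := by
  simp [crossCap]

lemma pderiv_v_ccu (t : Fin (k - 1)) (r : ℕ) :
    pderiv (Sum.inr (Sum.inl t) : CCDom k) (ccu K k r) = 0 := by
  unfold ccu
  split_ifs <;> simp [pderiv_X]

lemma pderiv_v_ccy (t : Fin (k - 1)) : pderiv (Sum.inr (Sum.inl t) : CCDom k) (ccy K k) = 0 := by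
  simp [ccy, pderiv_X]

lemma pderiv_v_ccv (t : Fin (k - 1)) (r : ℕ) :
    pderiv (Sum.inr (Sum.inl t) : CCDom k) (ccv K k r) = if r = t + 1 then 1 else 0 := by
  unfold ccv
  split_ifs with h h' h' <;> simp [pderiv_X, Pi.single_apply, Fin.ext_iff] <;> omega

lemma pderiv_v_crossCap_W1 (hk : 2 ≤ k) (t : Fin (k - 1)) :
    pderiv (Sum.inr (Sum.inl t) : CCDom k) (crossCap K k (Sum.inr (Sum.inr 0))) = 0 := by
  simp [crossCap_W1 hk, pderiv_v_ccu, pderiv_v_ccy]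

lemma pderiv_v_crossCap_W2 (t : Fin (k - 1)) :
    pderiv (Sum.inr (Sum.inl t) : CCDom k) (crossCap K k (Sum.inr (Sum.inr 1)))
      = ccy K k ^ (t + 1 : ℕ) := by
  simp [crossCap_W2, pderiv_v_ccv, pderiv_v_ccy]

lemma sum_pderiv_mul_etaLow (j : ℕ) (f : MvPolynomial (CCDom k) K) :
    ∑ s, pderiv s f * etaLow K k j s
      = ∑ t : Fin (k - 1), pderiv (Sum.inr (Sum.inl t)) f
          * aeval (crossCap K k) (Btilde K k j (t + 1)) := by
  simp [Fintype.sum_sum_type, etaLow]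

lemma aeval_crossCap_Btilde (hk : 2 ≤ k) (j i : ℕ) :
    aeval (crossCap K k) (Btilde K k j i)
      = k * (∑ r ∈ Icc 1 (i - 1), ccu K k (i + j - r) * ccv K k r
              - ∑ r ∈ Icc 1 i, ccu K k r * ccv K k (i + j - r)
              + ccv K k (i + j) * ∑ a ∈ Icc 1 k, ccu K k a * ccy K k ^ a
              - ccu K k (i + j) * ∑ b ∈ Icc 1 (k - 1), ccv K k b * ccy K k ^ b)
        - ((k - 1) * (k - j) : ℕ) * (ccu K k j * ccv K k i) := by
  simp only [Btilde, ccW1, ccW2, map_sub, map_add, map_mul, map_sum, map_natCast, aeval_X,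
    aeval_crossCap_ccU, aeval_crossCap_ccV, crossCap_W1 hk, crossCap_W2]
  ring

lemma aeval_crossCap_Ctilde2 (hk : 2 ≤ k) (j : ℕ) :
    aeval (crossCap K k) (Ctilde2 K k j)
      = k * -(ccv K k j * ∑ a ∈ Icc 1 k, ccu K k a * ccy K k ^ a)
        - ((k - 1) * (k - j) : ℕ)
          * (ccu K k j * ∑ b ∈ Icc 1 (k - 1), ccv K k b * ccy K k ^ b) := by
  simp only [Ctilde2, ccW1, ccW2, map_sub, map_neg, map_mul, map_natCast, aeval_X,
    aeval_crossCap_ccU, aeval_crossCap_ccV, crossCap_W1 hk, crossCap_W2]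
  ring

lemma sum_pow_mul_aeval_Btilde (hk : 2 ≤ k) {j : ℕ} (hj : 1 ≤ j) :
    ∑ t : Fin (k - 1), ccy K k ^ (t + 1 : ℕ) * aeval (crossCap K k) (Btilde K k j (t + 1))
      = aeval (crossCap K k) (Ctilde2 K k j) := by
  set y := ccy K k
  set φ := crossCap K k
  rw [Fin.sum_univ_eq_sum_range (fun i => y ^ (i + 1) * aeval φ (Btilde K k j (i + 1))),
    range_eq_Ico, sum_Ico_add' (fun i => y ^ i * aeval φ (Btilde K k j i)),
    Ico_add_one_right_eq_Icc, zero_add, aeval_crossCap_Ctilde2 hk,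
    ← sum_pow_mul_mixedSums hj (fun _ => ccu_eq_zero_of_lt) (fun _ => ccv_eq_zero_of_lt),
    mul_sum, mul_sum, mul_sum, ← sum_sub_distrib]
  refine sum_congr rfl fun i _ => ?_
  rw [aeval_crossCap_Btilde hk]
  ring

end CrossCap

theorem firstFamily_liftable_general {K : Type*} [Field K] (k j : ℕ)
    (hk : 2 ≤ k) (hj1 : 1 ≤ j) :
    ∀ m : CCTgt k,
      ∑ s : CCDom k, pderiv s (crossCap K k m) * etaLow K k j s
        = aeval (crossCap K k) (xiTilde K k j m) := by
  intro m
  rw [sum_pderiv_mul_etaLow]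
  rcases m with i | i | w
  · simp [crossCap, xiTilde, pderiv_v_ccu]
  · simp only [crossCap, xiTilde, Sum.elim_inr, Sum.elim_inl, pderiv_v_ccv,
      Nat.add_right_cancel_iff, ← Fin.ext_iff, ite_mul, one_mul, zero_mul, sum_ite_eq, mem_univ,
      if_true]
  · revert w
    refine Fin.forall_fin_two.mpr ⟨?_, ?_⟩
    · simp [xiTilde, pderiv_v_crossCap_W1 hk]
    · simp only [xiTilde, Sum.elim_inr, one_ne_zero, if_false, pderiv_v_crossCap_W2]
      exact sum_pow_mul_aeval_Btilde hk hj1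

/-- for `k ≥ 2` and `1 ≤ j ≤ k−1`, the vector field `ξ̃_j` is liftable
over the minimal cross cap map `φ_k`, with lowerable field `η_j`:
`Dφ_k · η_j = ξ̃_j ∘ φ_k`, i.e. for every target coordinate `m`,
`∑ s, ∂(φ_k)_m/∂x_s · (η_j)_s = (ξ̃_j)_m ∘ φ_k`. -/
theorem firstFamily_liftable {K : Type*} [Field K] (k j : ℕ)
    (hk : 2 ≤ k) (hj1 : 1 ≤ j) (hj2 : j ≤ k - 1) :
    ∀ m : CCTgt k,
      ∑ s : CCDom k, pderiv s (crossCap K k m) * etaLow K k j s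
        = aeval (crossCap K k) (xiTilde K k j m) :=
  firstFamily_liftable_general k j hk hj1
end
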